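/- Let A ∈ ℝ^{N×N} have all its complex eigenvalues in the open left half-plane (Re(μ) < 0 for every μ in the spectrum of A over ℂ), let B ∈ ℝ^{N×J}, C ∈ ℝ^{O×N}, x₀ ∈ ℝ^N, and let u : [0,∞) → ℝ^J be continuous and bounded, i.e., sup_{t≥0} ‖u(t)‖ ≤ M < ∞. Then the state x(t) = exp(tA) x₀ + ∫₀ᵗ exp((t−s)A) B u(s) ds and the output y(t) = C x(t) of the linear control system are bounded on [0,∞): there exists R > 0 with ‖x(t)‖ ≤ R and ‖y(t)‖ ≤ R for all t ≥ 0. -/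

import Mathlib

/-! Every eigenvalue of `exp A` is `exp μ` for an eigenvalue `μ` of `A` (the commuting maps `A`
and `exp A` have a common eigenvector in each eigenspace of `exp A`), so for Hurwitz `A` the
spectrum of `exp A` lies in the open unit disc. By Gelfand's formula some power
`exp A ^ k = exp (k • A)` is then a strict contraction, and the semigroup law upgrades this to
exponential decay `‖exp (t • A)‖ ≤ c e^{bt}` with `b < 0`. The free response is thus bounded by
`c ‖x₀‖` and the forced response by the integral of the decay bound, `c ‖B‖ M / |b|`. -/

open Matrix Filter
open NormedSpace Set

section

variable {𝔸 : Type*} [NormedRing 𝔸] [NormedAlgebra ℝ 𝔸] [NormedAlgebra ℚ 𝔸] [CompleteSpace 𝔸]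

theorem norm_exp_add_nat_mul_smul_le (x : 𝔸) (s τ : ℝ) (k : ℕ) :
    ‖exp ((s + k * τ) • x)‖ ≤ ‖exp (s • x)‖ * ‖exp (τ • x)‖ ^ k := by
  induction k with
  | zero => simp
  | succ k ih =>
    have hsplit : exp ((s + (k + 1 : ℕ) * τ) • x) = exp ((s + k * τ) • x) * exp (τ • x) := by
      rw [← NormedSpace.exp_add_of_commute (((Commute.refl x).smul_left _).smul_right _),
        ← add_smul]
      push_cast
      ring_nf
    calc ‖exp ((s + (k + 1 : ℕ) * τ) • x)‖
        ≤ ‖exp ((s + k * τ) • x)‖ * ‖exp (τ • x)‖ := hsplit ▸ norm_mul_le _ _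
      _ ≤ ‖exp (s • x)‖ * ‖exp (τ • x)‖ ^ k * ‖exp (τ • x)‖ := by gcongr
      _ = ‖exp (s • x)‖ * ‖exp (τ • x)‖ ^ (k + 1) := by ring

theorem exists_norm_exp_smul_le_of_norm_exp_smul_lt_one (x : 𝔸) {τ : ℝ} (hτ : 0 < τ)
    (hx : ‖exp (τ • x)‖ < 1) :
    ∃ c b : ℝ, 0 ≤ c ∧ b < 0 ∧ ∀ t, 0 ≤ t → ‖exp (t • x)‖ ≤ c * Real.exp (b * t) := by
  have hcont : Continuous fun s : ℝ => exp (s • x) := by fun_prop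
  obtain ⟨K, hK⟩ := (isCompact_Icc (a := 0) (b := τ)).exists_bound_of_continuousOn
    hcont.continuousOn
  have hK0 : 0 ≤ K := (norm_nonneg _).trans (hK 0 ⟨le_rfl, hτ.le⟩)
  set q := max ‖exp (τ • x)‖ (1 / 2)
  have hq0 : 0 < q := lt_max_of_lt_right one_half_pos
  have hq1 : q < 1 := max_lt hx one_half_lt_one
  have hlogq : Real.log q < 0 := Real.log_neg hq0 hq1
  refine ⟨K / q, Real.log q / τ, by positivity, div_neg_of_neg_of_pos hlogq hτ, fun t ht => ?_⟩
  set k := ⌊t / τ⌋₊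
  have hkτ : k * τ ≤ t := (le_div_iff₀ hτ).mp (Nat.floor_le (div_nonneg ht hτ.le))
  have hτk : t < (k + 1) * τ := (div_lt_iff₀ hτ).mp (Nat.lt_floor_add_one _)
  have hs : t - k * τ ∈ Icc 0 τ := ⟨sub_nonneg.mpr hkτ, by linarith⟩
  -- the right-hand side is `q ^ (t / τ - 1)`
  have hqk : q ^ k ≤ Real.exp (Real.log q / τ * t) / q := by
    rw [← Real.rpow_natCast, Real.rpow_def_of_pos hq0, le_div_iff₀ hq0]
    calc Real.exp (Real.log q * k) * q = Real.exp (Real.log q * (k + 1)) := by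
          rw [mul_add_one, Real.exp_add, Real.exp_log hq0]
      _ ≤ Real.exp (Real.log q / τ * t) := by
          refine Real.exp_le_exp.mpr ?_
          rw [div_mul_eq_mul_div, le_div_iff₀ hτ]
          nlinarith [mul_lt_mul_of_neg_left hτk hlogq]
  calc ‖exp (t • x)‖ = ‖exp ((t - k * τ + k * τ) • x)‖ := by rw [sub_add_cancel]
    _ ≤ ‖exp ((t - k * τ) • x)‖ * ‖exp (τ • x)‖ ^ k := norm_exp_add_nat_mul_smul_le x _ τ k
    _ ≤ K * q ^ k := by gcongr; exacts [hK _ hs, le_max_left _ _]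
    _ ≤ K * (Real.exp (Real.log q / τ * t) / q) := by gcongr
    _ = K / q * Real.exp (Real.log q / τ * t) := by ring

end

theorem exists_norm_pow_lt_one_of_forall_norm_lt_one {A : Type*} [NormedRing A]
    [NormedAlgebra ℂ A] [CompleteSpace A] (a : A) (ha : ∀ z ∈ spectrum ℂ a, ‖z‖ < 1) :
    ∃ k : ℕ, 0 < k ∧ ‖a ^ k‖ < 1 := by
  rcases subsingleton_or_nontrivial A with _ | _
  · exact ⟨1, one_pos, by simp [Subsingleton.elim (a ^ 1) 0]⟩
  have hrad : spectralRadius ℂ a < (1 : NNReal) :=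
    spectrum.spectralRadius_lt_of_forall_lt a fun z hz => mod_cast ha z hz
  obtain ⟨k, hk, hk0⟩ := ((spectrum.pow_norm_pow_one_div_tendsto_nhds_spectralRadius a).eventually
    (gt_mem_nhds hrad)).and (eventually_gt_atTop 0) |>.exists
  refine ⟨k, hk0, not_le.mp fun h => ?_⟩
  rw [ENNReal.coe_one, ENNReal.ofReal_lt_one] at hk
  exact hk.not_ge (Real.one_le_rpow h (by positivity))

theorem Module.End.exists_hasEigenvector_of_commute {K V : Type*} [Field K] [IsAlgClosed K]
    [AddCommGroup V] [Module K V] [FiniteDimensional K V] {f g : Module.End K V}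
    (hfg : Commute f g) {ν : K} (hν : g.HasEigenvalue ν) :
    ∃ μ v, f.HasEigenvector μ v ∧ g.HasEigenvector ν v := by
  have hmaps : MapsTo f (g.eigenspace ν) (g.eigenspace ν) :=
    Module.End.mapsTo_genEigenspace_of_comm hfg.symm ν 1
  have : Nontrivial (g.eigenspace ν) := Submodule.nontrivial_iff_ne_bot.mpr hν
  obtain ⟨μ, hμ⟩ := Module.End.exists_eigenvalue (f.restrict hmaps)
  obtain ⟨w, hw⟩ := hμ.exists_hasEigenvector
  have hw0 : (w : V) ≠ 0 := by simpa using hw.2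
  refine ⟨μ, w, ⟨?_, hw0⟩, ⟨w.2, hw0⟩⟩
  rw [Module.End.mem_eigenspace_iff]
  exact congrArg Subtype.val hw.apply_eq_smul

theorem norm_intervalIntegral_le_of_norm_le_mul_exp {E : Type*} [NormedAddCommGroup E]
    [NormedSpace ℝ E] {f : ℝ → E} {K b t : ℝ} (hb : b < 0) (ht : 0 ≤ t)
    (hf : ∀ s ∈ Icc 0 t, ‖f s‖ ≤ K * Real.exp (b * (t - s))) :
    ‖∫ s in (0 : ℝ)..t, f s‖ ≤ K / -b := by
  have hK : 0 ≤ K :=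
    nonneg_of_mul_nonneg_left ((norm_nonneg _).trans (hf 0 ⟨le_rfl, ht⟩)) (Real.exp_pos _)
  have hint :
      ∫ s in (0 : ℝ)..t, K * Real.exp (b * (t - s)) = K * (1 - Real.exp (b * t)) / -b := by
    simp_rw [mul_sub]
    rw [intervalIntegral.integral_const_mul,
      intervalIntegral.integral_comp_sub_mul (fun s => Real.exp s) hb.ne, integral_exp]
    simp only [sub_self, mul_zero, sub_zero, Real.exp_zero, smul_eq_mul]
    field_simp
    ring
  calc ‖∫ s in (0 : ℝ)..t, f s‖ ≤ ∫ s in (0 : ℝ)..t, K * Real.exp (b * (t - s)) :=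
        intervalIntegral.norm_integral_le_of_norm_le ht
          (MeasureTheory.ae_of_all _ fun s hs => hf s (Ioc_subset_Icc_self hs))
          (Continuous.intervalIntegrable (by fun_prop) _ _)
    _ = K * (1 - Real.exp (b * t)) / -b := hint
    _ ≤ K * 1 / -b := by
        gcongr
        · linarith
        · linarith [Real.exp_pos (b * t)]
    _ = K / -b := by rw [mul_one]

namespace Matrix

-- the operator norm induced by the sup norm that `n → ℝ` carries in the statement
attribute [local instance] Matrix.linftyOpSeminormedAddCommGroup
  Matrix.linftyOpNormedRing Matrix.linftyOpNormedAlgebra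

theorem linfty_opNorm_map_eq {m n α β : Type*} [Fintype m] [Fintype n]
    [SeminormedAddCommGroup α] [SeminormedAddCommGroup β] (A : Matrix m n α) (f : α → β)
    (hf : ∀ a, ‖f a‖₊ = ‖a‖₊) : ‖A.map f‖ = ‖A‖ := by
  simp [linfty_opNorm_def, hf]

variable {n : Type*} [Fintype n] [DecidableEq n]

theorem exp_mulVec_of_mulVec_eq_smul {𝕂 : Type*} [RCLike 𝕂] {M : Matrix n n 𝕂} {μ : 𝕂}
    {v : n → 𝕂} (hv : M *ᵥ v = μ • v) : exp M *ᵥ v = exp μ • v := by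
  have hpow (k : ℕ) : M ^ k *ᵥ v = μ ^ k • v := by
    induction k with
    | zero => simp
    | succ k ih => rw [pow_succ, ← mulVec_mulVec, hv, mulVec_smul, ih, smul_smul, ← pow_succ']
  have hM := (exp_series_hasSum_exp' (𝕂 := 𝕂) M).map (mulVec.addMonoidHomLeft v)
    (continuous_id.matrix_mulVec continuous_const)
  have hμ := (exp_series_hasSum_exp' (𝕂 := 𝕂) μ).smul_const v
  refine hM.unique ?_
  convert hμ using 2 with k
  change ((k.factorial : 𝕂)⁻¹ • M ^ k) *ᵥ v = _
  rw [smul_mulVec, hpow, smul_smul, smul_eq_mul]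

theorem exists_exp_eq_of_mem_spectrum_exp (M : Matrix n n ℂ) {z : ℂ}
    (hz : z ∈ spectrum ℂ (exp M)) : ∃ μ ∈ spectrum ℂ M, Complex.exp μ = z := by
  rw [← spectrum_toLin', ← Module.End.hasEigenvalue_iff_mem_spectrum] at hz
  have hcomm : Commute (toLin' M) (toLin' (exp M)) :=
    (Commute.refl M).exp_right.map toLinAlgEquiv'
  obtain ⟨μ, v, hμ, hz⟩ := Module.End.exists_hasEigenvector_of_commute hcomm hz
  refine ⟨μ, spectrum_toLin' M ▸ Module.End.hasEigenvalue_iff_mem_spectrum.mp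
    (Module.End.hasEigenvalue_of_hasEigenvector hμ), ?_⟩
  have hexp : exp M *ᵥ v = exp μ • v := exp_mulVec_of_mulVec_eq_smul hμ.apply_eq_smul
  rw [Complex.exp_eq_exp_ℂ]
  exact smul_left_injective ℂ hz.2 (hexp.symm.trans hz.apply_eq_smul)

theorem exp_map_algebraMap {𝕂 : Type*} [RCLike 𝕂] (A : Matrix n n ℝ) :
    exp (A.map (algebraMap ℝ 𝕂)) = (exp A).map (algebraMap ℝ 𝕂) :=
  (map_exp (algebraMap ℝ 𝕂).mapMatrix
    (continuous_id.matrix_map (continuous_algebraMap ℝ 𝕂)) A).symm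

theorem exists_norm_exp_smul_le_of_forall_re_neg (A : Matrix n n ℝ)
    (hA : ∀ μ ∈ spectrum ℂ (A.map (algebraMap ℝ ℂ)), μ.re < 0) :
    ∃ c b : ℝ, 0 ≤ c ∧ b < 0 ∧ ∀ t, 0 ≤ t → ‖exp (t • A)‖ ≤ c * Real.exp (b * t) := by
  have hspec : ∀ z ∈ spectrum ℂ (exp (A.map (algebraMap ℝ ℂ))), ‖z‖ < 1 := by
    intro z hz
    obtain ⟨μ, hμ, rfl⟩ := exists_exp_eq_of_mem_spectrum_exp _ hz
    rw [Complex.norm_exp]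
    exact Real.exp_lt_one_iff.mpr (hA μ hμ)
  obtain ⟨k, hk0, hk⟩ := exists_norm_pow_lt_one_of_forall_norm_lt_one _ hspec
  have hnorm : ‖exp ((k : ℝ) • A)‖ = ‖exp (A.map (algebraMap ℝ ℂ)) ^ k‖ := by
    rw [← linfty_opNorm_map_eq _ (algebraMap ℝ ℂ) fun a => by simp, ← exp_map_algebraMap,
      Matrix.map_smul _ _ fun a => by simp, Nat.cast_smul_eq_nsmul, Matrix.exp_nsmul]
  exact exists_norm_exp_smul_le_of_norm_exp_smul_lt_one A (Nat.cast_pos.mpr hk0)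
    (hnorm.trans_lt hk)

theorem exists_norm_exp_mulVec_add_integral_le {m : Type*} [Fintype m]
    (A : Matrix n n ℝ) (B : Matrix n m ℝ) (x₀ : n → ℝ)
    (hA : ∀ μ ∈ spectrum ℂ (A.map (algebraMap ℝ ℂ)), μ.re < 0)
    (u : ℝ → m → ℝ) (M : ℝ) (hu : ∀ t, 0 ≤ t → ‖u t‖ ≤ M) :
    ∃ R : ℝ, ∀ t, 0 ≤ t →
      ‖exp (t • A) *ᵥ x₀ + ∫ s in (0 : ℝ)..t, exp ((t - s) • A) *ᵥ (B *ᵥ u s)‖ ≤ R := by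
  obtain ⟨c, b, hc, hb, hdecay⟩ := A.exists_norm_exp_smul_le_of_forall_re_neg hA
  refine ⟨c * ‖x₀‖ + c * ‖B‖ * M / -b, fun t ht => (norm_add_le _ _).trans (add_le_add ?_ ?_)⟩
  · calc ‖exp (t • A) *ᵥ x₀‖ ≤ ‖exp (t • A)‖ * ‖x₀‖ := linfty_opNorm_mulVec _ _
      _ ≤ c * Real.exp (b * t) * ‖x₀‖ := by gcongr; exact hdecay t ht
      _ ≤ c * 1 * ‖x₀‖ := by
          gcongr
          exact Real.exp_le_one_iff.mpr (mul_nonpos_of_nonpos_of_nonneg hb.le ht)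
      _ = c * ‖x₀‖ := by ring
  · refine norm_intervalIntegral_le_of_norm_le_mul_exp hb ht fun s hs => ?_
    calc ‖exp ((t - s) • A) *ᵥ (B *ᵥ u s)‖ ≤ ‖exp ((t - s) • A)‖ * (‖B‖ * ‖u s‖) :=
          (linfty_opNorm_mulVec _ _).trans (by gcongr; exact linfty_opNorm_mulVec _ _)
      _ ≤ c * Real.exp (b * (t - s)) * (‖B‖ * M) := by
          gcongr
          exacts [hdecay _ (sub_nonneg.mpr hs.2), hu s hs.1]
      _ = c * ‖B‖ * M * Real.exp (b * (t - s)) := by ring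

end Matrix

theorem hurwitz_bounded_input_bounded_state_and_output_general
    (N J O : ℕ) (A : Matrix (Fin N) (Fin N) ℝ) (B : Matrix (Fin N) (Fin J) ℝ)
    (C : Matrix (Fin O) (Fin N) ℝ) (x₀ : Fin N → ℝ)
    (hA : ∀ μ ∈ spectrum ℂ (A.map (algebraMap ℝ ℂ)), μ.re < 0)
    (u : ℝ → Fin J → ℝ)
    (M : ℝ) (hbound : ∀ t : ℝ, 0 ≤ t → ‖u t‖ ≤ M)
    (x : ℝ → Fin N → ℝ)
    (hx : ∀ t : ℝ, x t =
      (NormedSpace.exp (t • A)).mulVec x₀ +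
        ∫ s in (0 : ℝ)..t, (NormedSpace.exp ((t - s) • A)).mulVec (B.mulVec (u s)))
    (y : ℝ → Fin O → ℝ) (hy : ∀ t : ℝ, y t = C.mulVec (x t)) :
    ∃ R : ℝ, 0 < R ∧ ∀ t : ℝ, 0 ≤ t → ‖x t‖ ≤ R ∧ ‖y t‖ ≤ R := by
  obtain ⟨Rx, hRx⟩ := A.exists_norm_exp_mulVec_add_integral_le B x₀ hA u M hbound
  have hxR (t : ℝ) (ht : 0 ≤ t) : ‖x t‖ ≤ Rx := hx t ▸ hRx t ht
  set L := LinearMap.toContinuousLinearMap C.mulVecLin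
  refine ⟨max (max Rx (‖L‖ * Rx)) 1, by positivity, fun t ht => ⟨?_, ?_⟩⟩
  · exact (hxR t ht).trans (le_max_of_le_left (le_max_left _ _))
  · calc ‖y t‖ ≤ ‖L‖ * ‖x t‖ := hy t ▸ L.le_opNorm (x t)
      _ ≤ ‖L‖ * Rx := by gcongr; exact hxR t ht
      _ ≤ max (max Rx (‖L‖ * Rx)) 1 := le_max_of_le_left (le_max_right _ _)

/-- For a linear control system with Hurwitz system matrix `A` (all complex eigenvalues
in the open left half-plane), continuous bounded input `u`, state given by the
variation-of-constants formula and output `y = C x`, both the state and the output are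
bounded on `[0,∞)`. -/
theorem hurwitz_bounded_input_bounded_state_and_output
    (N J O : ℕ) (A : Matrix (Fin N) (Fin N) ℝ) (B : Matrix (Fin N) (Fin J) ℝ)
    (C : Matrix (Fin O) (Fin N) ℝ) (x₀ : Fin N → ℝ)
    (hA : ∀ μ ∈ spectrum ℂ (A.map (algebraMap ℝ ℂ)), μ.re < 0)
    (u : ℝ → Fin J → ℝ) (hu : ContinuousOn u (Set.Ici (0 : ℝ)))
    (M : ℝ) (hbound : ∀ t : ℝ, 0 ≤ t → ‖u t‖ ≤ M)
    (x : ℝ → Fin N → ℝ)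
    (hx : ∀ t : ℝ, x t =
      (NormedSpace.exp (t • A)).mulVec x₀ +
        ∫ s in (0 : ℝ)..t, (NormedSpace.exp ((t - s) • A)).mulVec (B.mulVec (u s)))
    (y : ℝ → Fin O → ℝ) (hy : ∀ t : ℝ, y t = C.mulVec (x t)) :
    ∃ R : ℝ, 0 < R ∧ ∀ t : ℝ, 0 ≤ t → ‖x t‖ ≤ R ∧ ‖y t‖ ≤ R :=
  hurwitz_bounded_input_bounded_state_and_output_general N J O A B C x₀ hA u M hbound x hx y hy
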